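/- Fix T ∈ ℕ, constants γ0, σ² > 0, power limits P_max ≥ 0 and P ≥ 0, and for each time slot i ∈ {1,…,T} distances d_I[i] > 0, d_E[i] > 0 and a splitting ratio ρ[i] ∈ [0,1]. Define r_i(p) = log(1 + γ0·p·ρ[i]/(d_I[i]²·σ²)) − log(1 + γ0·p·ρ[i]/(γ0·(1−ρ[i])·p + σ²·d_E[i]²)). Suppose p[1],…,p[T] satisfy 0 ≤ p[i] ≤ P_max for all i and Σ_{i=1}^T p[i] ≤ P. Define p'[i] = p[i] if r_i(p[i]) ≥ 0 and p'[i] = 0 otherwise. Then p' also satisfies 0 ≤ p'[i] ≤ P_max for all i and Σ_{i=1}^T p'[i] ≤ P, and Σ_{i=1}^T r_i(p'[i]) = Σ_{i=1}^T max(r_i(p[i]), 0). (Hence dropping the operator [·]⁺ from the secrecy-rate objective causes no loss of optimality.) -/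
import Mathlib

/-- Dropping the `[·]⁺` operator from the secrecy-rate objective causes no loss of
optimality: zeroing the power in any slot with negative secrecy rate keeps all power
constraints satisfied and achieves the objective with the positive-part operator. -/
theorem stmt_2 (T : ℕ) (γ0 σ2 Pmax P : ℝ) (hγ0 : 0 < γ0) (hσ2 : 0 < σ2)
    (hPmax : 0 ≤ Pmax) (hP : 0 ≤ P)
    (dI dE ρ : Fin T → ℝ) (hdI : ∀ i, 0 < dI i) (hdE : ∀ i, 0 < dE i)
    (hρ : ∀ i, ρ i ∈ Set.Icc (0:ℝ) 1)
    (r : Fin T → ℝ → ℝ)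
    (hr : ∀ i p, r i p = Real.log (1 + γ0 * p * ρ i / (dI i ^ 2 * σ2))
        - Real.log (1 + γ0 * p * ρ i / (γ0 * (1 - ρ i) * p + σ2 * dE i ^ 2)))
    (p : Fin T → ℝ) (hp : ∀ i, 0 ≤ p i ∧ p i ≤ Pmax) (hsum : ∑ i, p i ≤ P)
    (p' : Fin T → ℝ) (hp' : ∀ i, p' i = if 0 ≤ r i (p i) then p i else 0) :
    (∀ i, 0 ≤ p' i ∧ p' i ≤ Pmax) ∧ (∑ i, p' i ≤ P) ∧
      ∑ i, r i (p' i) = ∑ i, max (r i (p i)) 0 := by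
  have hr0 : ∀ i, r i 0 = 0 := by
    intro i; rw [hr]; simp
  refine ⟨?_, ?_, ?_⟩
  · intro i
    rw [hp' i]
    split
    · exact hp i
    · exact ⟨le_refl 0, hPmax⟩
  · refine le_trans (Finset.sum_le_sum ?_) hsum
    intro i _
    rw [hp' i]
    split
    · exact le_refl _
    · exact (hp i).1
  · apply Finset.sum_congr rfl
    intro i _
    rw [hp' i]
    split
    next h => rw [max_eq_left h]
    next h => rw [hr0 i, max_eq_right (le_of_not_ge h)]
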